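/- arXiv:0709.1477 — 7 statements merged into one kernel-verified Lean document; each statement's English description precedes it below -/
import Mathlib

section
/- Let n ≥ 1 and let W : S_n → ℝ be a probability distribution on S_n (W(σ) ≥ 0 for all σ and Σ_σ W(σ) = 1) that is constant on descent classes, i.e. W(σ) = W(τ) whenever Des(σ) = Des(τ). Suppose there exists τ₀ ∈ S_n with W(τ₀) > 0 such that Des(τ₀) is neither ∅ nor the full set {1,…,n−1}. Then every function u : S_n → ℝ satisfying u(γ) = Σ_{σ∈S_n} W(σ)·u(σ⁻¹γ) for all γ ∈ S_n is constant. Consequently, the left random walk on S_n driven by W has a unique stationary probability distribution, namely the uniform distribution ν(γ) = 1/n! for all γ. -/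
/-!
A function `u` with `u γ = ∑ σ, W σ * u (σ⁻¹ * γ)` attains its maximum on a set that is invariant
under the subgroup generated by the support of `W` (maximum principle), so `u` is constant once
the descent class `C_D` of a set `D ≠ ∅, univ` generates `S_n`; stationary distributions are then
uniform.

Generation is proved by induction on `n`, peeling off the last position: placing the largest value
there embeds the class of the descents before it into `C_D` when the last position is an ascent,
and placing `k` or `k + 1` there after a smaller value exhibits `swap k (k + 1)` as a quotient of
two elements of `C_D`. The quotient sets `C_D / C_D` of `D`, of its complement and of its mirror
image are conjugate by the reversal `w₀`; they generate `S_n` unless `D` is an initial or final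
segment, and initial segments are treated by a separate induction.
-/

/-- The descent set of a permutation of `Fin (n+1)`, as a finset of `Fin n`. -/
def Des {n : ℕ} (σ : Equiv.Perm (Fin (n + 1))) : Finset (Fin n) :=
  Finset.univ.filter (fun i : Fin n => σ i.succ < σ i.castSucc)

open Equiv Finset Subgroup
open scoped Pointwise

section Closure

variable {G : Type*} [Group G]

lemma closure_eq_top_of_image_subset (f : G ≃* G) {S T : Set G} (h : f '' S ⊆ T)
    (hS : closure S = ⊤) : closure T = ⊤ :=
  top_unique <| calc
    ⊤ = (closure S).map f.toMonoidHom := by rw [hS, map_top_of_surjective _ f.surjective]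
    _ = closure (f '' S) := MonoidHom.map_closure _ _
    _ ≤ closure T := closure_mono h

lemma div_subset_closure (S : Set G) : S / S ⊆ closure S := by
  rintro _ ⟨a, ha, b, hb, rfl⟩
  exact div_mem (subset_closure ha) (subset_closure hb)

lemma eq_top_of_swap_mem {n : ℕ} {H : Subgroup (Perm (Fin (n + 1)))}
    (h : ∀ k : Fin n, swap k.castSucc k.succ ∈ H) : H = ⊤ := by
  refine eq_top_iff.2 fun g _ => ?_
  have hg : g ∈ Submonoid.closure (Set.range fun k : Fin n => swap k.castSucc k.succ) := by
    rw [Perm.mclosure_swap_castSucc_succ]; trivial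
  exact (Submonoid.closure_le (S := H.toSubmonoid)).2 (Set.range_subset_iff.2 h) hg

end Closure

section Insertion

variable {n : ℕ}

/-- `insLast σ v` has one-line notation `σ(0)', …, σ(n)', v`, where `x'` is `x` shifted up by one
when `x ≥ v`. -/
noncomputable def insLast (σ : Perm (Fin (n + 1))) (v : Fin (n + 2)) : Perm (Fin (n + 2)) :=
  Equiv.ofBijective (Fin.lastCases v fun i => v.succAbove (σ i)) <| by
    refine Finite.injective_iff_bijective.mp fun a b hab => ?_
    induction a using Fin.lastCases <;> induction b using Fin.lastCases <;>
      simp only [Fin.lastCases_last, Fin.lastCases_castSucc] at hab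
    · rfl
    · exact absurd hab.symm (Fin.succAbove_ne _ _)
    · exact absurd hab (Fin.succAbove_ne _ _)
    · rw [σ.injective (Fin.succAbove_right_injective hab)]

@[simp]
lemma insLast_last (σ : Perm (Fin (n + 1))) (v : Fin (n + 2)) : insLast σ v (Fin.last _) = v := by
  simp [insLast]

@[simp]
lemma insLast_castSucc (σ : Perm (Fin (n + 1))) (v : Fin (n + 2)) (i : Fin (n + 1)) :
    insLast σ v i.castSucc = v.succAbove (σ i) := by
  simp [insLast]

lemma swap_succAbove (k y : Fin (n + 1)) :
    swap k.castSucc k.succ (k.castSucc.succAbove y) = k.succ.succAbove y := by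
  rcases lt_trichotomy y k with h | rfl | h
  · have hy : y.castSucc < k.castSucc := Fin.castSucc_lt_castSucc_iff.2 h
    rw [Fin.succAbove_of_castSucc_lt _ _ hy,
      Fin.succAbove_of_castSucc_lt _ _ (hy.trans Fin.castSucc_lt_succ)]
    exact swap_apply_of_ne_of_ne hy.ne (Fin.castSucc_lt_succ_iff.2 h.le).ne
  · simp
  · rw [Fin.succAbove_of_le_castSucc _ _ (Fin.castSucc_le_castSucc_iff.2 h.le),
      Fin.succAbove_of_le_castSucc _ _ (Fin.succ_le_castSucc_iff.2 h)]
    exact swap_apply_of_ne_of_ne (Fin.castSucc_lt_succ_iff.2 h.le).ne' (by simpa using h.ne')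

lemma swap_mul_insLast (σ : Perm (Fin (n + 1))) (k : Fin (n + 1)) :
    swap k.castSucc k.succ * insLast σ k.castSucc = insLast σ k.succ := by
  ext x : 1
  induction x using Fin.lastCases <;> simp [swap_succAbove]

noncomputable def liftLast : Perm (Fin (n + 1)) →* Perm (Fin (n + 2)) where
  toFun σ := insLast σ (Fin.last _)
  map_one' := by ext x : 1; induction x using Fin.lastCases <;> simp
  map_mul' σ τ := by ext x : 1; induction x using Fin.lastCases <;> simp

lemma liftLast_swap (a b : Fin (n + 1)) : liftLast (swap a b) = swap a.castSucc b.castSucc := by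
  ext x : 1
  induction x using Fin.lastCases with
  | last =>
    simp [liftLast,
      swap_apply_of_ne_of_ne (Fin.castSucc_lt_last a).ne' (Fin.castSucc_lt_last b).ne']
  | cast i => simp [liftLast, (Fin.castSucc_injective _).map_swap]

lemma closure_eq_top_of_liftLast {S' : Set (Perm (Fin (n + 1)))} {S : Set (Perm (Fin (n + 2)))}
    (hS' : closure S' = ⊤) (hlift : liftLast '' S' ⊆ S)
    (hlast : swap (Fin.last n).castSucc (Fin.last n).succ ∈ closure S) : closure S = ⊤ := by
  have hmem : ∀ σ, liftLast σ ∈ closure S := fun σ => by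
    have : liftLast σ ∈ (closure S').map liftLast := ⟨σ, hS' ▸ mem_top σ, rfl⟩
    rw [MonoidHom.map_closure] at this
    exact closure_mono hlift this
  refine eq_top_of_swap_mem fun k => ?_
  induction k using Fin.lastCases with
  | last => exact hlast
  | cast j =>
    rw [Fin.succ_castSucc, ← liftLast_swap]
    exact hmem _

end Insertion

section DescentSets

variable {n : ℕ}

lemma mem_des {σ : Perm (Fin (n + 1))} {i : Fin n} : i ∈ Des σ ↔ σ i.succ < σ i.castSucc := by
  simp [Des]

noncomputable def truncLast (D : Finset (Fin (n + 1))) : Finset (Fin n) :=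
  D.preimage Fin.castSucc (Fin.castSucc_injective n).injOn

@[simp]
lemma mem_truncLast {D : Finset (Fin (n + 1))} {i : Fin n} : i ∈ truncLast D ↔ i.castSucc ∈ D :=
  mem_preimage

lemma truncLast_nonempty {D : Finset (Fin (n + 1))} (hne : D.Nonempty) (hD : Fin.last n ∉ D) :
    (truncLast D).Nonempty := by
  obtain ⟨i, hi⟩ := hne
  exact ⟨i.castPred (ne_of_mem_of_not_mem hi hD), by simpa using hi⟩

lemma isLowerSet_truncLast {D : Finset (Fin (n + 1))} (h : IsLowerSet (D : Set (Fin (n + 1)))) :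
    IsLowerSet (truncLast D : Set (Fin n)) :=
  fun _ _ hab hb => mem_truncLast.2 (h (Fin.castSucc_le_castSucc_iff.2 hab) (mem_truncLast.1 hb))

lemma isLowerSet_of_truncLast {D : Finset (Fin (n + 1))} (hD : Fin.last n ∉ D)
    (h : IsLowerSet (truncLast D : Set (Fin n))) : IsLowerSet (D : Set (Fin (n + 1))) := by
  intro a b hba ha
  have ha' : a ≠ Fin.last n := ne_of_mem_of_not_mem ha hD
  have hb' : b ≠ Fin.last n := (hba.trans_lt (Fin.lt_last_iff_ne_last.2 ha')).ne
  simpa using @h (a.castPred ha') (b.castPred hb') (Fin.castPred_le_castPred_iff.2 hba)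
    (by simpa using ha)

@[simp]
lemma map_revPerm_map_revPerm (D : Finset (Fin n)) :
    (D.map Fin.revPerm.toEmbedding).map Fin.revPerm.toEmbedding = D := by
  ext; simp [Fin.revPerm_symm]

lemma isLowerSet_map_revPerm {D : Finset (Fin n)} (h : IsUpperSet (D : Set (Fin n))) :
    IsLowerSet (D.map Fin.revPerm.toEmbedding : Set (Fin n)) := by
  intro a b hba ha
  simp only [coe_map, coe_toEmbedding, Set.mem_image, mem_coe] at ha ⊢
  obtain ⟨x, hx, rfl⟩ := ha
  exact ⟨b.rev, h (Fin.le_rev_iff.2 hba) hx, Fin.rev_rev b⟩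

lemma des_insLast {σ : Perm (Fin (n + 1))} {v : Fin (n + 2)} {D : Finset (Fin (n + 1))}
    (hσ : Des σ = truncLast D) (hv : Fin.last n ∈ D ↔ v ≤ (σ (Fin.last n)).castSucc) :
    Des (insLast σ v) = D := by
  ext i
  induction i using Fin.lastCases with
  | last =>
    rw [mem_des, Fin.succ_last, insLast_last, insLast_castSucc, Fin.lt_succAbove_iff_le_castSucc,
      hv]
  | cast j =>
    rw [mem_des, Fin.succ_castSucc, insLast_castSucc, insLast_castSucc,
      Fin.succAbove_lt_succAbove_iff, ← mem_des, hσ, mem_truncLast]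

lemma exists_des_eq : ∀ {n : ℕ} (D : Finset (Fin n)), ∃ σ : Perm (Fin (n + 1)), Des σ = D
  | 0, _ => ⟨1, Subsingleton.elim _ _⟩
  | n + 1, D => by
    obtain ⟨τ, hτ⟩ := exists_des_eq (truncLast D)
    by_cases h : Fin.last n ∈ D
    · exact ⟨insLast τ 0, des_insLast hτ (by simp [h])⟩
    · exact ⟨insLast τ (Fin.last _), des_insLast hτ (by simp [h])⟩

lemma exists_des_eq_and_apply_last_eq_zero {D : Finset (Fin (n + 1))} (h : Fin.last n ∈ D) :
    ∃ σ : Perm (Fin (n + 2)), Des σ = D ∧ σ (Fin.last _) = 0 :=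
  let ⟨τ, hτ⟩ := exists_des_eq (truncLast D)
  ⟨insLast τ 0, des_insLast hτ (by simp [h]), insLast_last _ _⟩

lemma exists_des_eq_and_apply_last_ne :
    ∀ {n : ℕ} {D : Finset (Fin n)}, D.Nonempty →
      ∃ σ : Perm (Fin (n + 1)), Des σ = D ∧ σ (Fin.last n) ≠ Fin.last n
  | 0, _, ⟨i, _⟩ => i.elim0
  | n + 1, D, hne => by
    by_cases h : Fin.last n ∈ D
    · obtain ⟨σ, hσ⟩ := exists_des_eq D
      have := mem_des.1 (hσ ▸ h)
      rw [Fin.succ_last] at this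
      exact ⟨σ, hσ, Fin.ne_last_of_lt this⟩
    · obtain ⟨τ, hτ, hlast⟩ := exists_des_eq_and_apply_last_ne (truncLast_nonempty hne h)
      refine ⟨insLast τ (τ (Fin.last n)).succ, des_insLast hτ (by simp [h]), ?_⟩
      rwa [insLast_last, Ne, ← Fin.succ_last, Fin.succ_inj]

lemma des_revPerm : Des (Fin.revPerm : Perm (Fin (n + 1))) = univ := by
  ext i
  simp [mem_des, Fin.rev_lt_rev]

lemma des_revPerm_mul (σ : Perm (Fin (n + 1))) : Des (Fin.revPerm * σ) = (Des σ)ᶜ := by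
  ext i
  have hne : σ i.castSucc ≠ σ i.succ := σ.injective.ne Fin.castSucc_lt_succ.ne
  simp only [mem_des, Perm.mul_apply, Fin.revPerm_apply, Fin.rev_lt_rev, mem_compl, not_lt]
  exact ⟨le_of_lt, fun h => h.lt_of_ne hne⟩

lemma des_conj_revPerm (σ : Perm (Fin (n + 1))) :
    Des (MulAut.conj Fin.revPerm σ) = (Des σ).map Fin.revPerm.toEmbedding := by
  ext i
  simp [mem_des, Perm.inv_def, Fin.revPerm_symm, Fin.rev_lt_rev, Fin.rev_castSucc, Fin.rev_succ]

end DescentSets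

section DescentClasses

variable {n : ℕ}

def descentClass (D : Finset (Fin n)) : Set (Perm (Fin (n + 1))) := {σ | Des σ = D}

lemma liftLast_mem_descentClass {D : Finset (Fin (n + 1))} (hD : Fin.last n ∉ D)
    {σ : Perm (Fin (n + 1))} (hσ : σ ∈ descentClass (truncLast D)) :
    liftLast σ ∈ descentClass D :=
  des_insLast hσ (by simp [hD])

lemma liftLast_image_div_subset {D : Finset (Fin (n + 1))} (hD : Fin.last n ∉ D) :
    liftLast '' (descentClass (truncLast D) / descentClass (truncLast D)) ⊆
      descentClass D / descentClass D := by
  rintro _ ⟨_, ⟨a, ha, b, hb, rfl⟩, rfl⟩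
  rw [map_div]
  exact Set.div_mem_div (liftLast_mem_descentClass hD ha) (liftLast_mem_descentClass hD hb)

lemma conj_revPerm_image_descentClass (D : Finset (Fin n)) :
    MulAut.conj Fin.revPerm '' descentClass D ⊆ descentClass (D.map Fin.revPerm.toEmbedding) := by
  rintro _ ⟨σ, hσ, rfl⟩
  exact (des_conj_revPerm σ).trans (congrArg _ hσ)

lemma conj_revPerm_image_div_descentClass (D : Finset (Fin n)) :
    MulAut.conj Fin.revPerm '' (descentClass D / descentClass D) ⊆
      descentClass (D.map Fin.revPerm.toEmbedding) /
        descentClass (D.map Fin.revPerm.toEmbedding) := by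
  rintro _ ⟨_, ⟨a, ha, b, hb, rfl⟩, rfl⟩
  rw [map_div]
  exact Set.div_mem_div (conj_revPerm_image_descentClass D ⟨a, ha, rfl⟩)
    (conj_revPerm_image_descentClass D ⟨b, hb, rfl⟩)

lemma conj_revPerm_image_div_descentClass_compl (D : Finset (Fin n)) :
    MulAut.conj Fin.revPerm '' (descentClass D / descentClass D) ⊆
      descentClass Dᶜ / descentClass Dᶜ := by
  rintro _ ⟨_, ⟨a, ha, b, hb, rfl⟩, rfl⟩
  have : MulAut.conj Fin.revPerm (a / b) = (Fin.revPerm * a) / (Fin.revPerm * b) := by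
    simp [MulAut.conj_apply, div_eq_mul_inv, mul_assoc]
  rw [this]
  exact Set.div_mem_div ((des_revPerm_mul a).trans (congrArg _ ha))
    ((des_revPerm_mul b).trans (congrArg _ hb))

lemma swap_mem_div_descentClass {D : Finset (Fin (n + 1))} (hD : Fin.last n ∉ D)
    {σ : Perm (Fin (n + 1))} (hσ : Des σ = truncLast D) {k : Fin (n + 1)}
    (hk : σ (Fin.last n) < k) : swap k.castSucc k.succ ∈ descentClass D / descentClass D := by
  rw [eq_mul_inv_of_mul_eq (swap_mul_insLast σ k), ← div_eq_mul_inv]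
  refine Set.div_mem_div (des_insLast hσ ?_) (des_insLast hσ ?_)
  · simp [hD, Fin.succ_le_castSucc_iff, hk.le]
  · simp [hD, hk]

lemma swap_last_mem_div_descentClass {D : Finset (Fin (n + 1))} (hD : Fin.last n ∉ D)
    (hne : D.Nonempty) :
    swap (Fin.last n).castSucc (Fin.last n).succ ∈ descentClass D / descentClass D := by
  obtain ⟨σ, hσ, hlast⟩ := exists_des_eq_and_apply_last_ne (truncLast_nonempty hne hD)
  exact swap_mem_div_descentClass hD hσ (Fin.lt_last_iff_ne_last.2 hlast)

lemma swap_zero_mem_div_descentClass {D : Finset (Fin (n + 1))} (h0 : 0 ∉ D) (hne : D.Nonempty) :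
    swap (0 : Fin (n + 1)).castSucc (0 : Fin (n + 1)).succ ∈ descentClass D / descentClass D := by
  have hlast : swap (Fin.last n).castSucc (Fin.last n).succ ∈
      descentClass (D.map Fin.revPerm.toEmbedding) / descentClass (D.map Fin.revPerm.toEmbedding) :=
    swap_last_mem_div_descentClass (by simpa [Fin.revPerm_symm] using h0) hne.map
  have := conj_revPerm_image_div_descentClass _ ⟨_, hlast, rfl⟩
  rw [map_revPerm_map_revPerm, MulAut.conj_apply, ← swap_apply_apply] at this
  simpa [swap_comm, Fin.rev_castSucc] using this

lemma swap_mem_div_descentClass_of_ne_zero {D : Finset (Fin (n + 2))} (hD : Fin.last _ ∉ D)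
    (h : Fin.last n ∈ truncLast D) {k : Fin (n + 2)} (hk : k ≠ 0) :
    swap k.castSucc k.succ ∈ descentClass D / descentClass D := by
  obtain ⟨σ, hσ, h0⟩ := exists_des_eq_and_apply_last_eq_zero h
  exact swap_mem_div_descentClass hD hσ (h0 ▸ Fin.pos_iff_ne_zero.2 hk)

theorem closure_div_descentClass_eq_top : ∀ {n : ℕ} (D : Finset (Fin (n + 1))),
    ¬IsLowerSet (D : Set (Fin (n + 1))) → ¬IsUpperSet (D : Set (Fin (n + 1))) →
      closure (descentClass D / descentClass D) = ⊤
  | 0, _, hl, _ => (hl fun a b _ ha => Subsingleton.elim (α := Fin 1) a b ▸ ha).elim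
  | n + 1, D, hl, hu => by
    -- the quotient sets of `D` and `Dᶜ` are conjugate, so we may assume `Fin.last ∉ D`
    suffices h : ∀ E : Finset (Fin (n + 2)), Fin.last _ ∉ E →
        ¬IsLowerSet (E : Set (Fin (n + 2))) → ¬IsUpperSet (E : Set (Fin (n + 2))) →
          closure (descentClass E / descentClass E) = ⊤ by
      by_cases hD : Fin.last _ ∈ D
      · refine closure_eq_top_of_image_subset _ (compl_compl D ▸
          conj_revPerm_image_div_descentClass_compl Dᶜ) (h Dᶜ (by simpa) ?_ ?_)
        · rwa [coe_compl, isLowerSet_compl]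
        · rwa [coe_compl, isUpperSet_compl]
      · exact h D hD hl hu
    intro E hE hl hu
    have hne : E.Nonempty := nonempty_iff_ne_empty.2 fun h => hl <| by
      rw [h, coe_empty]; exact isLowerSet_empty
    have hl' : ¬IsLowerSet (truncLast E : Set (Fin (n + 1))) :=
      fun h => hl (isLowerSet_of_truncLast hE h)
    by_cases hu' : IsUpperSet (truncLast E : Set (Fin (n + 1)))
    · have htop : Fin.last n ∈ truncLast E := by
        simpa [Fin.top_eq_last] using hu'.top_mem.2 (coe_nonempty.2 (truncLast_nonempty hne hE))
      have h0 : 0 ∉ E := fun h0 => hl' <| by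
        rw [hu'.bot_mem.1 (by rwa [mem_coe, mem_truncLast, bot_eq_zero, Fin.castSucc_zero])]
        exact isLowerSet_univ
      refine eq_top_of_swap_mem fun k => subset_closure ?_
      rcases eq_or_ne k 0 with rfl | hk
      · exact swap_zero_mem_div_descentClass h0 hne
      · exact swap_mem_div_descentClass_of_ne_zero hE htop hk
    · exact closure_eq_top_of_liftLast (closure_div_descentClass_eq_top _ hl' hu')
        (liftLast_image_div_subset hE) (subset_closure (swap_last_mem_div_descentClass hE hne))

theorem closure_descentClass_eq_top_of_isLowerSet : ∀ {n : ℕ} (D : Finset (Fin (n + 1))),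
    IsLowerSet (D : Set (Fin (n + 1))) → D.Nonempty → D ≠ univ → closure (descentClass D) = ⊤
  | 0, _, _, ⟨i, hi⟩, hnu =>
    (hnu (eq_univ_of_forall fun j => Subsingleton.elim (α := Fin 1) i j ▸ hi)).elim
  | n + 1, D, hl, hne, hnu => by
    have hD : Fin.last _ ∉ D := fun h => hnu <| by
      simpa [Fin.top_eq_last] using hl.top_mem.1 h
    have hdiv := div_subset_closure (descentClass D)
    by_cases htop : truncLast D = univ
    · refine eq_top_of_swap_mem fun k => ?_
      rcases eq_or_ne k 0 with rfl | hk
      · -- `σ = (n + 2, …, 2, 0, 1)` conjugates `swap (n + 1) (n + 2)` to `swap 0 1`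
        have hσ : insLast Fin.revPerm 1 ∈ descentClass D :=
          des_insLast (by rw [des_revPerm, htop]) (by simp [hD])
        have := mul_mem (mul_mem (subset_closure hσ)
          (hdiv (swap_last_mem_div_descentClass hD hne))) (inv_mem (subset_closure hσ))
        rw [← swap_apply_apply] at this
        simpa using this
      · exact hdiv (swap_mem_div_descentClass_of_ne_zero hD (htop ▸ mem_univ _) hk)
    · exact closure_eq_top_of_liftLast
        (closure_descentClass_eq_top_of_isLowerSet _ (isLowerSet_truncLast hl)
          (truncLast_nonempty hne hD) htop)
        (Set.image_subset_iff.2 fun _ hσ => liftLast_mem_descentClass hD hσ)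
        (hdiv (swap_last_mem_div_descentClass hD hne))

theorem closure_descentClass_eq_top {n : ℕ} (D : Finset (Fin n)) (hne : D ≠ ∅) (hnu : D ≠ univ) :
    closure (descentClass D) = ⊤ := by
  cases n with
  | zero => exact (hne (Subsingleton.elim _ _)).elim
  | succ n =>
    rw [← nonempty_iff_ne_empty] at hne
    by_cases hl : IsLowerSet (D : Set (Fin (n + 1)))
    · exact closure_descentClass_eq_top_of_isLowerSet D hl hne hnu
    by_cases hu : IsUpperSet (D : Set (Fin (n + 1)))
    · have hnu' : D.map Fin.revPerm.toEmbedding ≠ univ := fun h => hnu <| by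
        simpa using congrArg (Finset.map Fin.revPerm.toEmbedding) h
      exact closure_eq_top_of_image_subset _
        (map_revPerm_map_revPerm D ▸ conj_revPerm_image_descentClass _)
        (closure_descentClass_eq_top_of_isLowerSet _ (isLowerSet_map_revPerm hu) hne.map hnu')
    · exact top_unique ((closure_div_descentClass_eq_top D hl hu).ge.trans
        ((closure_le _).2 (div_subset_closure _)))

end DescentClasses

section RandomWalk

variable {G : Type*} [Group G] [Fintype G] {W u : G → ℝ}

lemma apply_inv_mul_eq_of_forall_le (hW0 : ∀ σ, 0 ≤ W σ) (hW1 : ∑ σ, W σ = 1)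
    (hu : ∀ γ, u γ = ∑ σ, W σ * u (σ⁻¹ * γ)) {γ : G} (hγ : ∀ x, u x ≤ u γ) {σ : G}
    (hσ : W σ ≠ 0) : u (σ⁻¹ * γ) = u γ := by
  have hsum : ∑ τ, W τ * (u γ - u (τ⁻¹ * γ)) = 0 := by
    simp only [mul_sub, sum_sub_distrib, ← sum_mul, hW1, one_mul, ← hu, sub_self]
  have := (sum_eq_zero_iff_of_nonneg fun τ _ => mul_nonneg (hW0 τ) (sub_nonneg.2 (hγ _))).1
    hsum σ (mem_univ σ)
  linarith [(mul_eq_zero.1 this).resolve_left hσ]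

theorem exists_forall_eq_of_harmonic [DecidableEq G] (hW0 : ∀ σ, 0 ≤ W σ) (hW1 : ∑ σ, W σ = 1)
    (hgen : closure {σ | W σ ≠ 0} = ⊤) (hu : ∀ γ, u γ = ∑ σ, W σ * u (σ⁻¹ * γ)) :
    ∃ c, ∀ γ, u γ = c := by
  obtain ⟨γ₀, -, hγ₀⟩ := exists_max_image univ u univ_nonempty
  set M := univ.filter fun γ => u γ = u γ₀
  have hstab : closure {σ | W σ ≠ 0} ≤ MulAction.stabilizer G M := (closure_le _).2 fun σ hσ => by
    have hsub : σ⁻¹ • M ⊆ M := fun x hx => by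
      obtain ⟨y, hy, rfl⟩ := mem_smul_finset.1 hx
      have hy : u y = u γ₀ := (mem_filter.1 hy).2
      simpa [M] using (apply_inv_mul_eq_of_forall_le hW0 hW1 hu
        (fun x => hy ▸ hγ₀ x (mem_univ x)) hσ).trans hy
    exact inv_mem_iff.1 (MulAction.mem_stabilizer_iff.2
      (eq_of_subset_of_card_le hsub (card_smul_finset _ _).ge))
  refine ⟨u γ₀, fun γ => ?_⟩
  have hM : (γ * γ₀⁻¹) • M = M := MulAction.mem_stabilizer_iff.1 (hstab (hgen ▸ mem_top _))
  have hγ := smul_mem_smul_finset (a := γ * γ₀⁻¹) (show γ₀ ∈ M from mem_filter.2 ⟨mem_univ _, rfl⟩)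
  rw [hM, smul_eq_mul, inv_mul_cancel_right] at hγ
  exact (mem_filter.1 hγ).2

theorem stationary_iff_eq_inv_card (hW1 : ∑ σ, W σ = 1)
    (hconst : ∀ u : G → ℝ, (∀ γ, u γ = ∑ σ, W σ * u (σ⁻¹ * γ)) → ∃ c, ∀ γ, u γ = c)
    (ν : G → ℝ) :
    ((∀ γ, 0 ≤ ν γ) ∧ ∑ γ, ν γ = 1 ∧ ∀ γ, ν γ = ∑ σ, W σ * ν (σ⁻¹ * γ)) ↔
      ∀ γ, ν γ = (Fintype.card G : ℝ)⁻¹ := by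
  constructor
  · rintro ⟨-, hsum, hν⟩ γ
    obtain ⟨c, hc⟩ := hconst ν hν
    simp only [hc, sum_const, card_univ, nsmul_eq_mul] at hsum ⊢
    exact eq_inv_of_mul_eq_one_right hsum
  · intro hν
    refine ⟨fun γ => hν γ ▸ by positivity, ?_, fun γ => ?_⟩
    · simp [hν, card_univ]
    · simp [hν, ← sum_mul, hW1]

end RandomWalk

/-- if `W` is a probability distribution on `S_{n+1}` which is
constant on descent classes and puts positive mass on some permutation whose
descent set is neither empty nor full, then every fixed vector of the left
random walk driven by `W` is constant; consequently the uniform distribution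
is the unique stationary distribution. -/
theorem unique_stationary_uniform (n : ℕ)
    (W : Equiv.Perm (Fin (n + 1)) → ℝ)
    (hW0 : ∀ σ, 0 ≤ W σ) (hW1 : ∑ σ, W σ = 1)
    (hWclass : ∀ σ τ, Des σ = Des τ → W σ = W τ)
    (hτ : ∃ τ₀ : Equiv.Perm (Fin (n + 1)),
      0 < W τ₀ ∧ Des τ₀ ≠ ∅ ∧ Des τ₀ ≠ Finset.univ) :
    (∀ u : Equiv.Perm (Fin (n + 1)) → ℝ,
      (∀ γ, u γ = ∑ σ, W σ * u (σ⁻¹ * γ)) → ∃ c : ℝ, ∀ γ, u γ = c) ∧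
    (∀ ν : Equiv.Perm (Fin (n + 1)) → ℝ,
      ((∀ γ, 0 ≤ ν γ) ∧ (∑ γ, ν γ = 1) ∧ (∀ γ, ν γ = ∑ σ, W σ * ν (σ⁻¹ * γ))) ↔
      (∀ γ, ν γ = (Nat.factorial (n + 1) : ℝ)⁻¹)) := by
  obtain ⟨τ₀, hpos, hne, hnu⟩ := hτ
  have hgen : closure {σ | W σ ≠ 0} = ⊤ := top_unique <|
    (closure_descentClass_eq_top _ hne hnu).ge.trans <| closure_mono fun σ hσ =>
      show W σ ≠ 0 from hWclass σ τ₀ hσ ▸ hpos.ne'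
  have hconst := fun u => exists_forall_eq_of_harmonic (u := u) hW0 hW1 hgen
  refine ⟨hconst, fun ν => ?_⟩
  rw [stationary_iff_eq_inv_card hW1 hconst, Fintype.card_perm, Fintype.card_fin]
end

section
/- For every integer n ≥ 1 and every natural number a, the following identity holds in ℚ: Σ ((−1)^{h−1}/h) · C(a, c_1)·C(a, c_2)⋯C(a, c_h) = (−1)^{n−1}·a/n, where the sum is over all compositions (c_1,…,c_h) of n (h being the length of the composition) and C(·,·) denotes the binomial coefficient. -/
/-!
Grouping the compositions of `n` by their length `h`, the inner sum of `∏ C(a, cᵢ)` is the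
coefficient of `Xⁿ` in `Gʰ` for `G = (1 + X)ᵃ - 1`, since `C(a, c)` is the coefficient of `Xᶜ`
in `G` for `c ≥ 1`. Weighting by `(-1)ʰ⁻¹ / h` and summing over `h` therefore gives the `n`-th
coefficient of `log (1 + G) = log ((1 + X)ᵃ) = a · log (1 + X)`, which is `(-1)ⁿ⁻¹ a / n`.
The functional equation of the logarithm is checked on derivatives: `f · (log f)' = f'`.
-/

open PowerSeries Finset

namespace Composition

lemma exists_blocks_eq_cons {n : ℕ} (c : Composition (n + 1)) :
    ∃ k l, c.blocks = (k + 1) :: l ∧ k + l.sum = n := by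
  obtain ⟨_ | k, l, hc⟩ :=
    List.exists_cons_of_ne_nil (c.blocks_eq_nil.not.mpr n.succ_ne_zero)
  · exact absurd (c.blocks_pos (hc ▸ List.mem_cons_self)) (lt_irrefl 0)
  · have := c.blocks_sum
    rw [hc, List.sum_cons] at this
    exact ⟨k, l, hc, by omega⟩

def consEquiv (n : ℕ) : Composition (n + 1) ≃ Σ k : Fin (n + 1), Composition (n - k) where
  toFun c :=
    ⟨⟨c.blocks.headI - 1, by obtain ⟨k, l, hc, hs⟩ := c.exists_blocks_eq_cons; simp [hc]; omega⟩,
      ⟨c.blocks.tail, fun h => c.blocks_pos (List.mem_of_mem_tail h),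
        by obtain ⟨k, l, hc, hs⟩ := c.exists_blocks_eq_cons; simp [hc]; omega⟩⟩
  invFun x := ⟨(x.1 + 1) :: x.2.blocks,
    by rintro i (_ | ⟨_, hi⟩); exacts [Nat.succ_pos _, x.2.blocks_pos hi],
    by have := x.1.is_lt; simp [x.2.blocks_sum]; omega⟩
  left_inv c := by
    obtain ⟨k, l, hc, -⟩ := c.exists_blocks_eq_cons
    ext1
    simp [hc]
  right_inv _ := rfl

theorem sum_blocks_succ {M : Type*} [AddCommMonoid M] (n : ℕ) (φ : List ℕ → M) :
    ∑ c : Composition (n + 1), φ c.blocks =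
      ∑ k ∈ range (n + 1), ∑ c : Composition (n - k), φ ((k + 1) :: c.blocks) := by
  rw [← (consEquiv n).symm.sum_comp, Fintype.sum_sigma]
  exact Fin.sum_univ_eq_sum_range
    (fun k => ∑ c : Composition (n - k), φ ((k + 1) :: c.blocks)) _

end Composition

namespace PowerSeries

section CommSemiring

variable {R : Type*} [CommSemiring R]

theorem coeff_succ_mul_of_constantCoeff_eq_zero {f : R⟦X⟧} (hf : constantCoeff f = 0)
    (g : R⟦X⟧) (n : ℕ) :
    coeff (n + 1) (f * g) = ∑ k ∈ range (n + 1), coeff (k + 1) f * coeff (n - k) g := by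
  rw [coeff_mul, Nat.sum_antidiagonal_succ, coeff_zero_eq_constantCoeff, hf, zero_mul, zero_add,
    Nat.sum_antidiagonal_eq_sum_range_succ_mk]

theorem coeff_pow_eq_sum_compositions {f : R⟦X⟧} (hf : constantCoeff f = 0) (h n : ℕ) :
    coeff n (f ^ h) =
      ∑ c : Composition n with c.length = h, (c.blocks.map (coeff · f)).prod := by
  induction h generalizing n with
  | zero =>
    rcases n with _ | n
    · have h_eq_ones (c : Composition 0) : c = Composition.ones 0 :=
        Composition.ext (by simp [c.blocks_eq_nil])
      simp [Fintype.sum_eq_single _ fun c hc => (hc (h_eq_ones c)).elim]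
    · rw [pow_zero, coeff_one, if_neg n.succ_ne_zero, eq_comm]
      exact sum_eq_zero fun c hc =>
        absurd (mem_filter.mp hc).2 (c.length_pos_of_pos n.succ_pos).ne'
  | succ h ih =>
    rcases n with _ | n
    · rw [coeff_zero_eq_constantCoeff, map_pow, hf, zero_pow h.succ_ne_zero, eq_comm]
      exact sum_eq_zero fun c hc => absurd (mem_filter.mp hc).2 (by simp [c.length_le.antisymm])
    · rw [sum_filter, pow_succ', coeff_succ_mul_of_constantCoeff_eq_zero hf, eq_comm]
      refine (Composition.sum_blocks_succ n fun l =>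
        if l.length = h + 1 then (l.map (coeff · f)).prod else 0).trans
          (sum_congr rfl fun k _ => ?_)
      simp only [List.length_cons, add_left_inj, List.map_cons, List.prod_cons]
      rw [ih, mul_sum, sum_filter]

end CommSemiring

section Log

variable {A : Type*} [CommRing A] [Algebra ℚ A]

theorem one_add_X_mul_derivative_log : (1 + X) * d⁄dX A (log A) = 1 := by
  ext n
  rcases n with _ | n
  · simp [deriv_log]
  · rw [add_mul, one_mul, map_add, coeff_succ_X_mul, deriv_log, coeff_mk, coeff_mk, coeff_one]
    simp [pow_succ]

theorem mul_derivative_logOf {f : A⟦X⟧} (hf : constantCoeff f = 1) :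
    f * d⁄dX A (logOf f) = d⁄dX A f := by
  have hsubst : HasSubst (f - 1) := HasSubst.of_constantCoeff_zero' (by simp [hf])
  have h_inv : f * (d⁄dX A (log A)).subst (f - 1) = 1 := by
    have := congrArg (substAlgHom (R := A) hsubst) one_add_X_mul_derivative_log
    rwa [map_mul, map_add, map_one, substAlgHom_X, add_sub_cancel, coe_substAlgHom] at this
  rw [logOf_eq, derivative_subst hsubst, ← mul_assoc, h_inv, one_mul, map_sub, derivative_one,
    sub_zero]

theorem logOf_mul {f g : A⟦X⟧} (hf : constantCoeff f = 1) (hg : constantCoeff g = 1) :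
    logOf (f * g) = logOf f + logOf g := by
  have : IsAddTorsionFree A := .of_module_rat A
  have hfg : constantCoeff (f * g) = 1 := by simp [hf, hg]
  refine derivative.ext ?_ (by simp [constantCoeff_logOf, hf, hg, hfg])
  apply (isUnit_iff_constantCoeff.mpr (by simp [hfg]) : IsUnit (f * g)).mul_left_cancel
  rw [mul_derivative_logOf hfg, map_add, Derivation.leibniz, mul_add, smul_eq_mul, smul_eq_mul]
  linear_combination -g * mul_derivative_logOf hf - f * mul_derivative_logOf hg

theorem logOf_pow {f : A⟦X⟧} (hf : constantCoeff f = 1) (a : ℕ) :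
    logOf (f ^ a) = a • logOf f := by
  induction a with
  | zero => simp [logOf_eq]
  | succ a ih => rw [pow_succ, logOf_mul (by simp [hf]) hf, ih, succ_nsmul]

theorem coeff_logOf {f : A⟦X⟧} (hf : constantCoeff f = 1) (n : ℕ) :
    coeff n (logOf f) = ∑ h ∈ range (n + 1), coeff h (log A) * coeff n ((f - 1) ^ h) := by
  have hf1 : constantCoeff (f - 1) = 0 := by simp [hf]
  rw [logOf_eq, coeff_subst' (HasSubst.of_constantCoeff_zero' hf1)]
  refine finsum_eq_sum_of_support_subset _ fun h hh => ?_
  rw [coe_range, Set.mem_Iio, Nat.lt_succ_iff]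
  by_contra! hlt
  have hdvd : X ^ h ∣ (f - 1) ^ h := pow_dvd_pow_of_dvd (X_dvd_iff.mpr hf1) h
  exact hh (by simp only [X_pow_dvd_iff.mp hdvd n hlt, smul_zero])

end Log

theorem coeff_one_add_X_pow_sub_one {R : Type*} [CommRing R] (a : ℕ) {n : ℕ} (hn : n ≠ 0) :
    coeff n ((1 + X : R⟦X⟧) ^ a - 1) = (a.choose n : R) := by
  rw [map_sub, coeff_one, if_neg hn, sub_zero, ← Polynomial.coe_X, ← Polynomial.coe_one,
    ← Polynomial.coe_add, ← Polynomial.coe_pow, Polynomial.coeff_coe,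
    Polynomial.coeff_one_add_X_pow]

-- Also true at `n = 0`, where `(-1) ^ (0 - 1) / 0 = 0` in `ℚ`.
theorem coeff_log_rat (n : ℕ) : coeff n (log ℚ) = (-1) ^ (n - 1) / n := by
  rcases n with _ | n
  · simp
  · simp [pow_succ]

end PowerSeries

theorem composition_binomial_identity_general (n : ℕ) (a : ℕ) :
    ∑ c : Composition n,
      ((-1 : ℚ)) ^ (c.length - 1) / (c.length : ℚ) *
        (c.blocks.map (fun b => (Nat.choose a b : ℚ))).prod =
    (-1 : ℚ) ^ (n - 1) * (a : ℚ) / (n : ℚ) := by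
  set G : ℚ⟦X⟧ := (1 + X) ^ a - 1
  have hG : constantCoeff G = 0 := by simp [G]
  calc ∑ c : Composition n, (-1 : ℚ) ^ (c.length - 1) / c.length *
        (c.blocks.map (fun b => (a.choose b : ℚ))).prod
      = ∑ c : Composition n, coeff c.length (log ℚ) * (c.blocks.map (coeff · G)).prod := by
        refine sum_congr rfl fun c _ => ?_
        rw [coeff_log_rat, List.map_congr_left fun b hb =>
          (coeff_one_add_X_pow_sub_one a (c.blocks_pos hb).ne').symm]
    _ = ∑ h ∈ range (n + 1), coeff h (log ℚ) * coeff n (G ^ h) := by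
        rw [← sum_fiberwise_of_maps_to fun c _ => mem_range.mpr (Nat.lt_succ_of_le c.length_le)]
        refine sum_congr rfl fun h _ => ?_
        rw [coeff_pow_eq_sum_compositions hG, mul_sum]
        exact sum_congr rfl fun c hc => by rw [(mem_filter.mp hc).2]
    _ = coeff n (logOf ((1 + X) ^ a)) := by rw [coeff_logOf (by simp)]
    _ = (-1 : ℚ) ^ (n - 1) * a / n := by
        rw [logOf_pow (by simp), logOf_one_add_X, map_nsmul, coeff_log_rat, nsmul_eq_mul]
        ring

/-- for every `n ≥ 1` and every natural number `a`,
`Σ ((−1)^{h−1}/h) · C(a,c_1)⋯C(a,c_h) = (−1)^{n−1}·a/n`, the sum being over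
all compositions `(c_1,…,c_h)` of `n`. -/
theorem composition_binomial_identity (n : ℕ) (hn : 1 ≤ n) (a : ℕ) :
    ∑ c : Composition n,
      ((-1 : ℚ)) ^ (c.length - 1) / (c.length : ℚ) *
        (c.blocks.map (fun b => (Nat.choose a b : ℚ))).prod =
    (-1 : ℚ) ^ (n - 1) * (a : ℚ) / (n : ℚ) :=
  composition_binomial_identity_general n a
end

section
/- Let n ≥ 1, let σ, τ ∈ S_n, and let d : {1,…,n} → ℕ. Then the following are equivalent: (i) for all i, j ∈ {1,…,n}, τ(i) < τ(j) if and only if σ(i) + n·d(i) < σ(j) + n·d(j); (ii) for every k with 1 ≤ k ≤ n−1, d(τ⁻¹(k)) ≤ d(τ⁻¹(k+1)), and moreover d(τ⁻¹(k)) < d(τ⁻¹(k+1)) whenever k ∈ Des(σ∘τ⁻¹). (Condition (i) says that τ is the standardization of the sequence (σ(1) + n·d(1), …, σ(n) + n·d(n)), where the standardization of a sequence of distinct numbers is the unique permutation with the same pairwise order relations.) -/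
/-!
Condition (i) says that the sequence `k ↦ σ(τ⁻¹ k) + N·d(τ⁻¹ k)`, i.e. the values listed in
`τ`-order, is strictly increasing, which on `Fin N` only has to be checked at consecutive
positions. Since the `σ`-values are distinct and below `N`, comparing `a + N·x` with `b + N·y`
is comparing `(x, a)` with `(y, b)` lexicographically: `x ≤ y`, strictly so when `b < a`,
i.e. at a descent of `σ ∘ τ⁻¹`.
-/

theorem Nat.add_mul_lt_add_mul_iff_lex {N a b x y : ℕ} (ha : a < N) (hb : b < N) :
    a + N * x < b + N * y ↔ x < y ∨ x = y ∧ a < b := by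
  constructor
  · intro h
    rcases lt_trichotomy x y with hxy | rfl | hxy
    · exact .inl hxy
    · exact .inr ⟨rfl, by omega⟩
    · have : N * (y + 1) ≤ N * x := Nat.mul_le_mul_left N hxy
      rw [Nat.mul_succ] at this
      omega
  · rintro (hxy | ⟨rfl, hab⟩)
    · have : N * (x + 1) ≤ N * y := Nat.mul_le_mul_left N hxy
      rw [Nat.mul_succ] at this
      omega
    · omega

theorem Nat.add_mul_lt_add_mul_iff_of_ne {N a b x y : ℕ} (ha : a < N) (hb : b < N)
    (hab : a ≠ b) : a + N * x < b + N * y ↔ x ≤ y ∧ (b < a → x < y) := by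
  rw [Nat.add_mul_lt_add_mul_iff_lex ha hb]
  omega

theorem Equiv.forall_lt_iff_lt_iff_strictMono {α β γ : Type*} [LinearOrder β] [Preorder γ]
    (e : α ≃ β) (g : α → γ) :
    (∀ i j, e i < e j ↔ g i < g j) ↔ StrictMono (g ∘ e.symm) := by
  refine ⟨fun h a b hab => ?_, fun h i j => ?_⟩
  · simpa [← h] using hab
  · simpa using (h.lt_iff_lt (a := e i) (b := e j)).symm

/-- `τ` is the standardization of the sequence
`(σ(1) + N·d(1), …, σ(N) + N·d(N))` (where `N = n+1`) if and only if
`d∘τ⁻¹` is weakly increasing along consecutive positions and strictly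
increasing at each descent of `σ∘τ⁻¹`. -/
theorem standardization_iff_descent_condition (n : ℕ)
    (σ τ : Equiv.Perm (Fin (n + 1))) (d : Fin (n + 1) → ℕ) :
    (∀ i j : Fin (n + 1), τ i < τ j ↔
      (σ i : ℕ) + (n + 1) * d i < (σ j : ℕ) + (n + 1) * d j) ↔
    (∀ k : Fin n,
      d (τ⁻¹ k.castSucc) ≤ d (τ⁻¹ k.succ) ∧
      (k ∈ Des (σ * τ⁻¹) → d (τ⁻¹ k.castSucc) < d (τ⁻¹ k.succ))) := by
  rw [Equiv.forall_lt_iff_lt_iff_strictMono, Fin.strictMono_iff_lt_succ, ← Equiv.Perm.inv_def]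
  refine forall_congr' fun k => ?_
  have hne : σ (τ⁻¹ k.castSucc) ≠ σ (τ⁻¹ k.succ) := by
    simpa using (Fin.castSucc_lt_succ (i := k)).ne
  simp only [Function.comp_apply, Des, Finset.mem_filter, Finset.mem_univ, true_and,
    Equiv.Perm.mul_apply, Fin.lt_def]
  exact Nat.add_mul_lt_add_mul_iff_of_ne (σ _).isLt (σ _).isLt (Fin.val_ne_of_ne hne)
end

section
/- Let n ≥ 1 and let r = (r_0, r_1, r_2, …) be a sequence of nonnegative real numbers with Σ_j r_j = 1. Then the random walk on S_n driven by the QS-distribution lumps by descent sets: for all σ, σ' ∈ S_n with Des(σ) = Des(σ') and every subset T of {1,…,n−1}, Σ_{τ : Des(τ) = T} F_{Des(σ∘τ⁻¹)}(r) = Σ_{τ : Des(τ) = T} F_{Des(σ'∘τ⁻¹)}(r). -/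
/-- The fundamental quasisymmetric function `F_S` evaluated at `r`. -/
noncomputable def Fqs {n : ℕ} (r : ℕ → ℝ) (S : Finset (Fin n)) : ℝ :=
  ∑' p : {i : Fin (n + 1) → ℕ //
      (∀ k : Fin n, i k.castSucc ≤ i k.succ) ∧ ∀ k ∈ S, i k.castSucc < i k.succ},
    ∏ j, r (p.1 j)

/-!
Standardization of words. Given `σ`, every word `u : Fin (n + 1) → ℕ` factors uniquely as
`u = i ∘ τ` with `τ` a permutation and `i` weakly increasing, strictly increasing at the
descents of `σ * τ⁻¹`: `τ⁻¹` sorts the letters `(u k, σ k)` lexicographically. Under this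
bijection `Des τ` is the set of lexicographic descents of `k ↦ (u k, σ k)`, which depends on
`σ` only through `Des σ`. Hence the transition probability from `σ` into the class `T` is the
sum of `∏ j, r (u j)` over the words `u` with lexicographic descent set `T`.
-/

open Equiv Finset

section Standardization

variable {n : ℕ} {α : Type*}

theorem mem_Des {σ : Perm (Fin (n + 1))} {k : Fin n} :
    k ∈ Des σ ↔ σ k.succ < σ k.castSucc := by
  simp [Des]

/-- `Fqs r S` is, by definition, the sum over `{i : Fin (n + 1) → ℕ // Admissible S i}`. -/
def Admissible [Preorder α] (S : Finset (Fin n)) (i : Fin (n + 1) → α) : Prop :=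
  (∀ k : Fin n, i k.castSucc ≤ i k.succ) ∧ ∀ k ∈ S, i k.castSucc < i k.succ

def lexGraph (u : Fin (n + 1) → α) (σ : Perm (Fin (n + 1))) :
    Fin (n + 1) → α ×ₗ Fin (n + 1) :=
  fun k => toLex (u k, σ k)

theorem lexGraph_injective (u : Fin (n + 1) → α) (σ : Perm (Fin (n + 1))) :
    Function.Injective (lexGraph u σ) :=
  fun _ _ h => σ.injective (congrArg (fun x => (ofLex x).2) h)

variable [LinearOrder α]

theorem admissible_des_iff_strictMono {π : Perm (Fin (n + 1))} {i : Fin (n + 1) → α} :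
    Admissible (Des π) i ↔ StrictMono fun a => toLex (i a, π a) := by
  simp only [Fin.strictMono_iff_lt_succ, Prod.Lex.toLex_lt_toLex, Admissible, mem_Des]
  constructor
  · rintro ⟨hle, hlt⟩ k
    refine (hle k).lt_or_eq.imp_right fun heq => ⟨heq, ?_⟩
    exact lt_of_le_of_ne (not_lt.1 fun hk => (hlt k hk).ne heq)
      (π.injective.ne Fin.castSucc_lt_succ.ne)
  · intro h
    exact ⟨fun k => (h k).elim le_of_lt fun h => h.1.le,
      fun k hk => (h k).resolve_right fun h' => h'.2.asymm hk⟩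

def lexDes (u : Fin (n + 1) → α) (D : Finset (Fin n)) : Finset (Fin n) :=
  univ.filter fun k => u k.succ < u k.castSucc ∨ (u k.succ = u k.castSucc ∧ k ∈ D)

theorem mem_lexDes_des {u : Fin (n + 1) → α} {σ : Perm (Fin (n + 1))} {k : Fin n} :
    k ∈ lexDes u (Des σ) ↔ lexGraph u σ k.succ < lexGraph u σ k.castSucc := by
  simp [lexDes, lexGraph, mem_Des, Prod.Lex.toLex_lt_toLex]

theorem admissible_comp_sort_lexGraph (u : Fin (n + 1) → α) (σ : Perm (Fin (n + 1))) :
    Admissible (Des (σ * (Tuple.sort (lexGraph u σ))⁻¹⁻¹))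
      (u ∘ Tuple.sort (lexGraph u σ)) := by
  rw [inv_inv, admissible_des_iff_strictMono]
  exact (Tuple.monotone_sort _).strictMono_of_injective
    ((lexGraph_injective u σ).comp (Tuple.sort _).injective)

variable {σ τ : Perm (Fin (n + 1))} {i : Fin (n + 1) → α}

theorem strictMono_lexGraph_comp_inv (h : Admissible (Des (σ * τ⁻¹)) i) :
    StrictMono (lexGraph (i ∘ τ) σ ∘ ⇑τ⁻¹) := by
  convert admissible_des_iff_strictMono.1 h using 1
  funext a
  simp [lexGraph]

theorem inv_eq_sort_lexGraph (h : Admissible (Des (σ * τ⁻¹)) i) :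
    τ⁻¹ = Tuple.sort (lexGraph (i ∘ τ) σ) := by
  refine Tuple.eq_sort_iff.2 ⟨(strictMono_lexGraph_comp_inv h).monotone, fun a b hab heq => ?_⟩
  exact absurd (lexGraph_injective _ _ heq) (τ⁻¹.injective.ne hab.ne)

theorem des_eq_lexDes (h : Admissible (Des (σ * τ⁻¹)) i) :
    Des τ = lexDes (i ∘ τ) (Des σ) := by
  ext k
  rw [mem_Des, mem_lexDes_des, ← (strictMono_lexGraph_comp_inv h).lt_iff_lt]
  simp [Function.comp_def]

def standardizationEquiv (σ : Perm (Fin (n + 1))) :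
    (Σ τ : Perm (Fin (n + 1)), {i : Fin (n + 1) → α // Admissible (Des (σ * τ⁻¹)) i}) ≃
      (Fin (n + 1) → α) where
  toFun p := p.2.1 ∘ p.1
  invFun u := ⟨(Tuple.sort (lexGraph u σ))⁻¹, _, admissible_comp_sort_lexGraph u σ⟩
  left_inv := fun ⟨τ, i, h⟩ => by
    refine Sigma.subtype_ext ?_ ?_
    · simp [← inv_eq_sort_lexGraph h]
    · simp [← inv_eq_sort_lexGraph h, Function.comp_assoc]
  right_inv u := by
    funext k
    simp

end Standardization

theorem summable_prod_apply {ι : Type*} {r : ι → ℝ} (hr : Summable r)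
    (m : ℕ) : Summable fun u : Fin m → ι => ∏ j, r (u j) := by
  suffices h : Summable fun u : Fin m → ι => ∏ j, |r (u j)| from
    .of_abs <| h.congr fun u => (abs_prod _ _).symm
  induction m with
  | zero => exact .of_finite
  | succ m ih =>
    rw [← (Fin.consEquiv fun _ => ι).summable_iff]
    refine (hr.abs.mul_of_nonneg ih (fun _ => abs_nonneg _)
      fun _ => prod_nonneg fun _ _ => abs_nonneg _).congr fun p => ?_
    simp [Fin.consEquiv, Fin.prod_univ_succ]

theorem sum_fqs_des_eq_tsum_lexDes {n : ℕ} {r : ℕ → ℝ} (hr : Summable r)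
    (σ : Perm (Fin (n + 1))) (T : Finset (Fin n)) :
    ∑ τ ∈ univ.filter (fun τ : Perm (Fin (n + 1)) => Des τ = T), Fqs r (Des (σ * τ⁻¹)) =
      ∑' u, {u | lexDes u (Des σ) = T}.indicator (fun u => ∏ j, r (u j)) u := by
  set e := standardizationEquiv (α := ℕ) σ
  set f := {u | lexDes u (Des σ) = T}.indicator (fun u : Fin (n + 1) → ℕ => ∏ j, r (u j))
  have hf : Summable fun p => f (e p) :=
    e.summable_iff.2 ((summable_prod_apply hr _).indicator _)
  have fiber (τ : Perm (Fin (n + 1))) :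
      ∑' i, f (e ⟨τ, i⟩) = if Des τ = T then Fqs r (Des (σ * τ⁻¹)) else 0 := by
    have h (i : {i // Admissible (Des (σ * τ⁻¹)) i}) :
        f (e ⟨τ, i⟩) = if Des τ = T then ∏ j, r (i.1 j) else 0 := by
      simp only [f, e, standardizationEquiv, Equiv.coe_fn_mk, Set.indicator_apply,
        Set.mem_ofPred_eq, ← des_eq_lexDes i.2, Function.comp_apply,
        Equiv.prod_comp τ fun j => r (i.1 j)]
    rw [tsum_congr h]
    split_ifs
    · rfl
    · exact tsum_zero
  rw [sum_filter, ← e.tsum_eq, hf.tsum_sigma, tsum_fintype]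
  exact sum_congr rfl fun τ _ => (fiber τ).symm

theorem qs_walk_lumps_by_descents_general (n : ℕ) (r : ℕ → ℝ)
    (hr1 : HasSum r 1)
    (σ σ' : Equiv.Perm (Fin (n + 1))) (h : Des σ = Des σ')
    (T : Finset (Fin n)) :
    ∑ τ ∈ Finset.univ.filter (fun τ : Equiv.Perm (Fin (n + 1)) => Des τ = T),
      Fqs r (Des (σ * τ⁻¹)) =
    ∑ τ ∈ Finset.univ.filter (fun τ : Equiv.Perm (Fin (n + 1)) => Des τ = T),
      Fqs r (Des (σ' * τ⁻¹)) := by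
  rw [sum_fqs_des_eq_tsum_lexDes hr1.summable, sum_fqs_des_eq_tsum_lexDes hr1.summable, h]

/-- the left random walk driven by the QS-distribution lumps by
descent sets: the total transition probability into a descent class `T`
depends only on the descent set of the starting permutation. -/
theorem qs_walk_lumps_by_descents (n : ℕ) (r : ℕ → ℝ)
    (hr0 : ∀ j, 0 ≤ r j) (hr1 : HasSum r 1)
    (σ σ' : Equiv.Perm (Fin (n + 1))) (h : Des σ = Des σ')
    (T : Finset (Fin n)) :
    ∑ τ ∈ Finset.univ.filter (fun τ : Equiv.Perm (Fin (n + 1)) => Des τ = T),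
      Fqs r (Des (σ * τ⁻¹)) =
    ∑ τ ∈ Finset.univ.filter (fun τ : Equiv.Perm (Fin (n + 1)) => Des τ = T),
      Fqs r (Des (σ' * τ⁻¹)) :=
  qs_walk_lumps_by_descents_general n r hr1 σ σ' h T
end

section
/- Let n ≥ 1 and let a be a positive integer. Then for all σ, τ ∈ S_n, the number of functions d : {1,…,n} → {0,1,…,a−1} such that for all i, j ∈ {1,…,n}, τ(i) < τ(j) ⟺ σ(i) + n·d(i) < σ(j) + n·d(j), equals the binomial coefficient C(n + a − 1 − des(σ∘τ⁻¹), n). In probabilistic terms: the transition probability of the a-shuffle walk from σ to τ is C(n + a − 1 − des(σ∘τ⁻¹), n)/a^n, in accordance with the Bayer–Diaconis formula. -/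
open Finset

theorem Nat.add_mul_lt_add_mul_iff {m p q x y : ℕ} (hp : p < m) (hq : q < m) (hpq : p ≠ q) :
    p + m * x < q + m * y ↔ x + (if q < p then 1 else 0) ≤ y := by
  rcases lt_trichotomy x y with h | rfl | h
  · have := Nat.mul_le_mul_left m h
    split_ifs <;> constructor <;> intro <;> nlinarith
  · split_ifs <;> omega
  · have := Nat.mul_le_mul_left m h
    split_ifs <;> constructor <;> intro <;> nlinarith

theorem Equiv.strictMono_comp_symm_iff {α β : Type*} [LinearOrder α] [Preorder β] (τ : α ≃ α)
    (f : α → β) : StrictMono (f ∘ τ.symm) ↔ ∀ i j, τ i < τ j ↔ f i < f j := by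
  constructor
  · intro h i j; simpa using (h.lt_iff_lt (a := τ i) (b := τ j)).symm
  · intro h i j hij; simpa using (h (τ.symm i) (τ.symm j)).1 (by simpa using hij)

theorem card_filter_strictMono (k m : ℕ) : #{g : Fin k → Fin m | StrictMono g} = m.choose k := by
  let e : (Fin k ↪o Fin m) ≃ {g : Fin k → Fin m // StrictMono g} :=
    { toFun f := ⟨f, f.strictMono⟩
      invFun g := OrderEmbedding.ofStrictMono g.1 g.2
      left_inv _ := rfl
      right_inv _ := rfl }
  rw [← Fintype.card_subtype, ← Nat.card_eq_fintype_card, ← Nat.card_congr e,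
    Nat.card_congr Set.powersetCard.ofFinEmbEquiv, Set.powersetCard.card, Nat.card_eq_fintype_card,
    Fintype.card_fin]

section MonotoneStrictAt

variable {N : ℕ} (D : Finset (Fin N))

def MonotoneStrictAt (u : Fin (N + 1) → ℕ) : Prop :=
  ∀ k : Fin N, u k.castSucc + (if k ∈ D then 1 else 0) ≤ u k.succ

instance : DecidablePred (MonotoneStrictAt D) := fun _ => by
  unfold MonotoneStrictAt; infer_instance

theorem MonotoneStrictAt.monotone {D : Finset (Fin N)} {u : Fin (N + 1) → ℕ}
    (h : MonotoneStrictAt D u) : Monotone u :=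
  Fin.monotone_iff_le_succ.2 fun k => le_of_add_le_left (h k)

def gapsBelow (i : Fin (N + 1)) : ℕ := #{k ∈ Dᶜ | k.castSucc < i}

theorem gapsBelow_zero : gapsBelow D 0 = 0 := by
  simp [gapsBelow]

theorem gapsBelow_last : gapsBelow D (Fin.last N) = N - #D := by
  simp [gapsBelow, Fin.castSucc_lt_last, card_compl]

theorem gapsBelow_succ (k : Fin N) :
    gapsBelow D k.succ = gapsBelow D k.castSucc + if k ∈ D then 0 else 1 := by
  simp only [gapsBelow, Fin.castSucc_lt_succ_iff, Fin.castSucc_lt_castSucc_iff, le_iff_lt_or_eq,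
    filter_or, filter_eq', mem_compl]
  split_ifs
  · simp
  · rw [card_union_of_disjoint (by simp), card_singleton]

theorem gapsBelow_mono : Monotone (gapsBelow D) :=
  Fin.monotone_iff_le_succ.2 fun k => by rw [gapsBelow_succ]; exact le_self_add

theorem strictMono_add_gapsBelow_iff (u : Fin (N + 1) → ℕ) :
    StrictMono (fun i => u i + gapsBelow D i) ↔ MonotoneStrictAt D u := by
  rw [Fin.strictMono_iff_lt_succ]
  refine forall_congr' fun k => ?_
  rw [gapsBelow_succ]
  split_ifs <;> omega

theorem gapsBelow_le_of_strictMono {g : Fin (N + 1) → ℕ} (hg : StrictMono g) (i : Fin (N + 1)) :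
    gapsBelow D i ≤ g i := by
  induction i using Fin.induction with
  | zero => simp [gapsBelow_zero]
  | succ k ih =>
    have := hg (Fin.castSucc_lt_succ (i := k))
    rw [gapsBelow_succ]
    split_ifs <;> omega

theorem monotoneStrictAt_sub_gapsBelow {g : Fin (N + 1) → ℕ} (hg : StrictMono g) :
    MonotoneStrictAt D (fun i => g i - gapsBelow D i) := by
  rw [← strictMono_add_gapsBelow_iff]
  convert hg using 2 with i
  exact Nat.sub_add_cancel (gapsBelow_le_of_strictMono D hg i)

theorem sub_gapsBelow_add_lt {M : ℕ} {g : Fin (N + 1) → Fin M} (hg : StrictMono g)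
    (i : Fin (N + 1)) : (g i : ℕ) - gapsBelow D i + (N - #D) < M := by
  have hg' : StrictMono fun i => (g i : ℕ) := hg
  have hmono := (monotoneStrictAt_sub_gapsBelow D hg').monotone (Fin.le_last i)
  have hlast := gapsBelow_le_of_strictMono D hg' (Fin.last N)
  simp only [gapsBelow_last] at hmono hlast
  have := (g (Fin.last N)).2
  omega

theorem card_filter_monotoneStrictAt (a : ℕ) :
    #{e : Fin (N + 1) → Fin a | MonotoneStrictAt D fun i => e i} =
      #{g : Fin (N + 1) → Fin (a + N - #D) | StrictMono g} := by
  have hD : #D ≤ N := by simpa using card_le_univ D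
  refine card_bij' (fun e _ i => ⟨e i + gapsBelow D i, ?_⟩)
    (fun g hg i => ⟨g i - gapsBelow D i, ?_⟩) ?_ ?_ ?_ ?_
  · have := gapsBelow_mono D (Fin.le_last i)
    rw [gapsBelow_last] at this
    omega
  · have := sub_gapsBelow_add_lt D (mem_filter.1 hg).2 i
    omega
  · intro e he
    exact mem_filter.2 ⟨mem_univ _, (strictMono_add_gapsBelow_iff D _).2 (mem_filter.1 he).2⟩
  · intro g hg
    simpa using monotoneStrictAt_sub_gapsBelow D (mem_filter.1 hg).2
  · intro e _
    ext i
    simp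
  · intro g hg
    ext i
    simpa using Nat.sub_add_cancel (gapsBelow_le_of_strictMono D (mem_filter.1 hg).2 i)

end MonotoneStrictAt

theorem strictMono_add_mul_iff_monotoneStrictAt_des {n : ℕ} (π : Equiv.Perm (Fin (n + 1)))
    (e : Fin (n + 1) → ℕ) :
    StrictMono (fun i => (π i : ℕ) + (n + 1) * e i) ↔ MonotoneStrictAt (Des π) e := by
  rw [Fin.strictMono_iff_lt_succ]
  refine forall_congr' fun k => ?_
  rw [Nat.add_mul_lt_add_mul_iff (π _).2 (π _).2
    (Fin.val_injective.ne (π.injective.ne (Fin.castSucc_lt_succ (i := k)).ne))]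
  simp only [Des, mem_filter, mem_univ, true_and, Fin.lt_def]

theorem ashuffle_transition_count_general (n : ℕ) (a : ℕ)
    (σ τ : Equiv.Perm (Fin (n + 1))) :
    ((Finset.univ : Finset (Fin (n + 1) → Fin a)).filter
      (fun d => ∀ i j : Fin (n + 1), τ i < τ j ↔
        (σ i : ℕ) + (n + 1) * (d i : ℕ) < (σ j : ℕ) + (n + 1) * (d j : ℕ))).card =
    Nat.choose (n + a - (Des (σ * τ⁻¹)).card) (n + 1) := by
  set D := Des (σ * τ⁻¹)
  calc _ = #{e : Fin (n + 1) → Fin a | MonotoneStrictAt D fun i => e i} := by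
        refine card_equiv (τ.arrowCongr (.refl _)) fun d => ?_
        simp [D, ← strictMono_add_mul_iff_monotoneStrictAt_des, ← Equiv.strictMono_comp_symm_iff,
          Function.comp_def]
    _ = #{g : Fin (n + 1) → Fin (a + n - #D) | StrictMono g} := card_filter_monotoneStrictAt D a
    _ = _ := by rw [card_filter_strictMono, Nat.add_comm]

/-- Bayer–Diaconis: the number of functions
`d : {1,…,N} → {0,…,a−1}` (`N = n+1`) such that `τ` is the standardization of
`(σ(1) + N·d(1), …, σ(N) + N·d(N))` equals `C(N + a − 1 − des(σ∘τ⁻¹), N)`;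
equivalently, the `a`-shuffle transition probability from `σ` to `τ` is
`C(N + a − 1 − des(σ∘τ⁻¹), N)/a^N`. -/
theorem ashuffle_transition_count (n : ℕ) (a : ℕ) (ha : 1 ≤ a)
    (σ τ : Equiv.Perm (Fin (n + 1))) :
    ((Finset.univ : Finset (Fin (n + 1) → Fin a)).filter
      (fun d => ∀ i j : Fin (n + 1), τ i < τ j ↔
        (σ i : ℕ) + (n + 1) * (d i : ℕ) < (σ j : ℕ) + (n + 1) * (d j : ℕ))).card =
    Nat.choose (n + a - (Des (σ * τ⁻¹)).card) (n + 1) :=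
  ashuffle_transition_count_general n a σ τ
end

section
/- Let n ≥ 1 and let r be a real number with r ≥ 1. For all σ, τ ∈ S_n, consider the finite sum Σ w(ε) over all sign functions ε : {1,…,n} → {+1,−1} satisfying: for all i, j ∈ {1,…,n}, τ(i) < τ(j) ⟺ ε(i)·σ(i) < ε(j)·σ(j) (as integers), where w(ε) = Π_{i=1}^n (1/r if ε(i) = +1, and 1 − 1/r if ε(i) = −1). Then this sum equals (r−1)^k / r^{n−1} if Des(σ∘τ⁻¹) = {1,2,…,k} for some k with 0 ≤ k ≤ n−1 (with k = 0 meaning Des(σ∘τ⁻¹) = ∅), and equals 0 if Des(σ∘τ⁻¹) is not of this form. (At r = 2 this specializes to Stembridge's theorem: assigning independent uniform ± signs to the entries of σ, the probability that the standardization of the signed sequence equals τ is 1/2^{n−1} when σ∘τ⁻¹ has descent set an initial segment, and 0 otherwise.) -/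
/-!
Re-indexing the signs along `τ`, the standardization of the signed sequence of `σ` is `τ` exactly
when the signed sequence of `π = σ τ⁻¹` is increasing. In an increasing signed sequence all
negative entries come before the positive ones, so the signs are `-` on `[0, m)` and `+` from `m`
on, and the sequence is increasing iff `π` decreases on `[0, m)` and increases on `[m, n]`, i.e.
iff `{i < m - 1} ⊆ Des π ⊆ {i < m}`. Hence `Des π` must be an initial segment `{i < k}`, and then
exactly `m = k` and `m = k + 1` qualify, with total weight
`q^k p^(n+1-k) + q^(k+1) p^(n-k) = q^k p^(n-k) (p + q)` for `p = 1/r`, `q = 1 - 1/r`, `p + q = 1`.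
-/

open Finset

namespace SignedStandardization

def signedValue (b : Bool) (x : ℕ) : ℤ := if b then (x : ℤ) + 1 else -((x : ℤ) + 1)

section signedValue

variable {x y : ℕ}

@[simp] lemma signedValue_true_lt_true : signedValue true x < signedValue true y ↔ x < y := by
  simp [signedValue]

@[simp] lemma signedValue_false_lt_false : signedValue false x < signedValue false y ↔ y < x := by
  simp [signedValue]; omega

@[simp] lemma signedValue_false_lt_true : signedValue false x < signedValue true y := by
  simp [signedValue]; omega

@[simp] lemma not_signedValue_true_lt_false : ¬ signedValue true x < signedValue false y := by
  simp [signedValue]; omega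

end signedValue

lemma monotone_of_strictMono_signedValue {α : Type*} [PartialOrder α] {δ : α → Bool}
    {v : α → ℕ} (h : StrictMono fun a => signedValue (δ a) (v a)) : Monotone δ := by
  intro a b hab
  rcases hab.eq_or_lt with rfl | hab
  · rfl
  · have := h hab
    cases hδa : δ a <;> cases hδb : δ b <;> simp_all

def positiveFrom {N : ℕ} (m : ℕ) : Fin N → Bool := fun a => decide (m ≤ (a : ℕ))

lemma exists_eq_positiveFrom_of_monotone {N : ℕ} {δ : Fin N → Bool} (h : Monotone δ) :
    ∃ m ≤ N, δ = positiveFrom m := by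
  by_cases hpos : ∃ a, δ a = true
  · obtain ⟨a₀, ha₀, hmin⟩ := (univ.filter fun a => δ a = true).exists_minimal
      (by simpa [Finset.Nonempty] using hpos)
    replace ha₀ : δ a₀ = true := by simpa using ha₀
    refine ⟨a₀, a₀.isLt.le, funext fun a => ?_⟩
    by_cases ha : a₀ ≤ a
    · simpa [positiveFrom, Fin.le_def.mp ha, ha₀, Bool.le_iff_imp] using h ha
    · have : δ a = false := by
        by_contra hδa
        exact ha (hmin (by simpa using hδa) (le_of_not_ge ha))
      simp [positiveFrom, Fin.le_def.not.mp ha, this]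
  · push Not at hpos
    refine ⟨N, le_rfl, funext fun a => ?_⟩
    simp [positiveFrom, hpos a, a.isLt]

lemma positiveFrom_ne_positiveFrom_succ {N m : ℕ} (hm : m < N) :
    positiveFrom (N := N) m ≠ positiveFrom (m + 1) := by
  intro h
  simpa [positiveFrom] using congrFun h ⟨m, hm⟩

lemma prod_positiveFrom {M : Type*} [CommMonoid M] {N m : ℕ} (hm : m ≤ N) (p q : M) :
    ∏ a : Fin N, (if positiveFrom m a then p else q) = q ^ m * p ^ (N - m) := by
  simp only [positiveFrom, decide_eq_true_eq]
  rw [Fin.prod_univ_eq_prod_range (fun i => if m ≤ i then p else q),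
    ← prod_range_mul_prod_Ico _ hm, prod_congr rfl fun i hi => if_neg (by simpa using hi),
    prod_congr rfl fun i hi => if_pos (mem_Ico.mp hi).1, prod_const, prod_const, card_range,
    Nat.card_Ico]

def initialSegment (n k : ℕ) : Finset (Fin n) := univ.filter fun i => (i : ℕ) < k

section initialSegment

variable {n k m : ℕ}

lemma initialSegment_sandwich_iff (hk : k ≤ n) (hm : m ≤ n + 1) :
    initialSegment n (m - 1) ⊆ initialSegment n k ∧ initialSegment n k ⊆ initialSegment n m ↔
      m = k ∨ m = k + 1 := by
  simp only [initialSegment, subset_iff, mem_filter, mem_univ, true_and]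
  constructor
  · rintro ⟨h₁, h₂⟩
    by_contra hne
    rcases Nat.lt_or_gt_of_ne (show m ≠ k by omega) with hmk | hkm
    · exact (h₂ (x := ⟨m, by omega⟩) hmk).false
    · have := h₁ (x := ⟨k, by omega⟩) (show k < m - 1 by omega)
      simp at this
  · rintro (rfl | rfl) <;> exact ⟨fun h => by omega, fun h => by omega⟩

lemma exists_eq_initialSegment_of_sandwich {D : Finset (Fin n)} (hm : m ≤ n + 1)
    (h₁ : initialSegment n (m - 1) ⊆ D) (h₂ : D ⊆ initialSegment n m) :
    ∃ k ≤ n, D = initialSegment n k := by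
  simp only [initialSegment, subset_iff, mem_filter, mem_univ, true_and] at h₁ h₂
  by_cases hlast : ∃ i ∈ D, (i : ℕ) = m - 1
  · obtain ⟨i, hiD, hi⟩ := hlast
    refine ⟨m, by omega, ext fun j => ?_⟩
    simp only [initialSegment, mem_filter, mem_univ, true_and]
    refine ⟨fun hj => h₂ hj, fun hj => ?_⟩
    rcases (show (j : ℕ) < m - 1 ∨ j = i by omega) with hj | rfl
    · exact h₁ hj
    · exact hiD
  · refine ⟨m - 1, by omega, ext fun j => ?_⟩
    simp only [initialSegment, mem_filter, mem_univ, true_and]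
    refine ⟨fun hj => ?_, fun hj => h₁ hj⟩
    have := h₂ hj
    have : (j : ℕ) ≠ m - 1 := fun h => hlast ⟨j, hj, h⟩
    omega

end initialSegment

lemma strictMono_signedValue_positiveFrom_iff {n m : ℕ} (π : Equiv.Perm (Fin (n + 1))) :
    StrictMono (fun a => signedValue (positiveFrom m a) (π a)) ↔
      initialSegment n (m - 1) ⊆ Des π ∧ Des π ⊆ initialSegment n m := by
  have step (i : Fin n) :
      signedValue (positiveFrom m i.castSucc) (π i.castSucc) <
          signedValue (positiveFrom m i.succ) (π i.succ) ↔
        ((i : ℕ) < m - 1 → i ∈ Des π) ∧ (i ∈ Des π → (i : ℕ) < m) := by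
    have hne : (π i.castSucc : ℕ) ≠ π i.succ :=
      Fin.val_ne_of_ne (π.injective.ne Fin.castSucc_lt_succ.ne)
    simp only [positiveFrom, Fin.val_castSucc, Fin.val_succ, Des, mem_filter, mem_univ, true_and,
      Fin.lt_def]
    -- at `i + 1 = m` a negative entry precedes a positive one, so there is no constraint
    rcases (show (i : ℕ) + 1 < m ∨ (i : ℕ) + 1 = m ∨ m ≤ i by omega) with h | h | h
    · simp [show ¬ m ≤ (i : ℕ) by omega, show ¬ m ≤ (i : ℕ) + 1 by omega]
      omega
    · simp [show ¬ m ≤ (i : ℕ) by omega, show m ≤ (i : ℕ) + 1 by omega]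
      omega
    · simp [h, show m ≤ (i : ℕ) + 1 by omega]
      omega
  simp only [Fin.strictMono_iff_lt_succ, step, forall_and, initialSegment, subset_iff, mem_filter,
    mem_univ, true_and]

open Classical in
lemma sum_filter_standardization_eq {N : ℕ} {R : Type*} [CommSemiring R]
    (σ τ : Equiv.Perm (Fin N)) (w : Bool → R) :
    ∑ ε ∈ univ.filter (fun ε : Fin N → Bool =>
        ∀ i j, τ i < τ j ↔ signedValue (ε i) (σ i) < signedValue (ε j) (σ j)), ∏ i, w (ε i) =
      ∑ δ ∈ univ.filter (fun δ : Fin N → Bool =>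
        StrictMono fun a => signedValue (δ a) ((σ * τ⁻¹) a)), ∏ a, w (δ a) := by
  refine sum_equiv (τ.arrowCongr (Equiv.refl Bool)) (fun ε => ?_) (fun ε _ => ?_)
  · simp only [mem_filter, mem_univ, true_and, Equiv.arrowCongr_apply, Equiv.coe_refl,
      Function.comp_apply, id]
    constructor
    · intro h a b hab
      simpa using (h (τ.symm a) (τ.symm b)).mp (by simpa using hab)
    · intro h i j
      simpa using (h.lt_iff_lt (a := τ i) (b := τ j)).symm
  · exact (Equiv.prod_comp τ.symm fun i => w (ε i)).symm

open Classical in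
lemma filter_strictMono_signedValue_eq_pair {n k : ℕ} {π : Equiv.Perm (Fin (n + 1))} (hk : k ≤ n)
    (hπ : Des π = initialSegment n k) :
    univ.filter (fun δ : Fin (n + 1) → Bool => StrictMono fun a => signedValue (δ a) (π a)) =
      {positiveFrom k, positiveFrom (k + 1)} := by
  ext δ
  simp only [mem_filter, mem_univ, true_and, mem_insert, mem_singleton]
  constructor
  · intro h
    obtain ⟨m, hm, rfl⟩ := exists_eq_positiveFrom_of_monotone (monotone_of_strictMono_signedValue h)
    rw [strictMono_signedValue_positiveFrom_iff, hπ, initialSegment_sandwich_iff hk hm] at h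
    rcases h with rfl | rfl <;> simp
  · rintro (rfl | rfl) <;>
      rw [strictMono_signedValue_positiveFrom_iff, hπ, initialSegment_sandwich_iff hk (by omega)] <;>
      simp

open Classical in
lemma filter_strictMono_signedValue_eq_empty {n : ℕ} {π : Equiv.Perm (Fin (n + 1))}
    (hπ : ¬ ∃ k ≤ n, Des π = initialSegment n k) :
    univ.filter (fun δ : Fin (n + 1) → Bool => StrictMono fun a => signedValue (δ a) (π a)) = ∅ := by
  refine filter_eq_empty_iff.mpr fun δ _ h => hπ ?_
  obtain ⟨m, hm, rfl⟩ := exists_eq_positiveFrom_of_monotone (monotone_of_strictMono_signedValue h)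
  rw [strictMono_signedValue_positiveFrom_iff] at h
  exact exists_eq_initialSegment_of_sandwich hm h.1 h.2

end SignedStandardization

open SignedStandardization in
/-- generalized Stembridge: assign to each entry of `σ`
(whose 1-indexed values are `σ(i)+1 ∈ {1,…,n+1}`) a sign `+` with weight `1/r`
or `−` with weight `1−1/r`. The total weight of the sign choices for which the
standardization of the signed sequence is `τ` equals `(r−1)^k/r^n` when
`Des(σ∘τ⁻¹)` is the initial segment `{1,…,k}` and `0` otherwise. -/
theorem signed_standardization_weight (n : ℕ) (r : ℝ) (hr : 1 ≤ r)
    (σ τ : Equiv.Perm (Fin (n + 1))) :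
    (∀ k : ℕ, k ≤ n →
      Des (σ * τ⁻¹) = Finset.univ.filter (fun i : Fin n => (i : ℕ) < k) →
      ∑ ε ∈ (Finset.univ : Finset (Fin (n + 1) → Bool)).filter
          (fun ε => ∀ i j : Fin (n + 1), τ i < τ j ↔
            (if ε i then ((σ i : ℤ) + 1) else -((σ i : ℤ) + 1)) <
              (if ε j then ((σ j : ℤ) + 1) else -((σ j : ℤ) + 1))),
        ∏ i, (if ε i then 1 / r else 1 - 1 / r) = (r - 1) ^ k / r ^ n) ∧
    ((¬ ∃ k ≤ n, Des (σ * τ⁻¹) =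
        Finset.univ.filter (fun i : Fin n => (i : ℕ) < k)) →
      ∑ ε ∈ (Finset.univ : Finset (Fin (n + 1) → Bool)).filter
          (fun ε => ∀ i j : Fin (n + 1), τ i < τ j ↔
            (if ε i then ((σ i : ℤ) + 1) else -((σ i : ℤ) + 1)) <
              (if ε j then ((σ j : ℤ) + 1) else -((σ j : ℤ) + 1))),
        ∏ i, (if ε i then 1 / r else 1 - 1 / r) = 0) := by
  have hr₀ : r ≠ 0 := (zero_lt_one.trans_le hr).ne'
  simp only [← signedValue.eq_1]
  rw [sum_filter_standardization_eq σ τ (fun b => if b then 1 / r else 1 - 1 / r)]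
  refine ⟨fun k hk hπ => ?_, fun hπ => ?_⟩
  · rw [filter_strictMono_signedValue_eq_pair hk hπ,
      sum_pair (positiveFrom_ne_positiveFrom_succ (by omega)), prod_positiveFrom (by omega),
      prod_positiveFrom (by omega)]
    obtain ⟨j, rfl⟩ := Nat.exists_eq_add_of_le hk
    rw [show k + j + 1 - k = j + 1 by omega, show k + j + 1 - (k + 1) = j by omega]
    calc _ = (1 - 1 / r) ^ k * (1 / r) ^ j * (1 / r + (1 - 1 / r)) := by ring
      _ = ((r - 1) / r) ^ k * (1 / r) ^ j := by rw [add_sub_cancel, mul_one, one_sub_div hr₀]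
      _ = (r - 1) ^ k / r ^ (k + j) := by
        rw [div_pow, one_div_pow, pow_add, div_mul_div_comm, mul_one]
  · rw [filter_strictMono_signedValue_eq_empty hπ, sum_empty]
end

section
/- Let n ≥ 1 and let r be a real number with r ≥ 1. For a sign function ε : {1,…,n} → {+1,−1}, set w(ε) = Π_{i=1}^n (1/r if ε(i) = +1, and 1 − 1/r if ε(i) = −1). Then the signed-standardization walk lumps by descent sets: for all σ, σ' ∈ S_n with Des(σ) = Des(σ') and every subset T of {1,…,n−1}, Σ w(ε) over all ε such that there exists ρ ∈ S_n with Des(ρ) = T and (for all i, j) ρ(i) < ρ(j) ⟺ ε(i)·σ(i) < ε(j)·σ(j), equals the corresponding sum with σ replaced by σ'. In other words, the probability that the standardization of (ε(1)·σ(1), …, ε(n)·σ(n)) has descent set T depends only on the descent set of σ. -/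
open Function Equiv

section Descents

variable {α β : Type*} [LinearOrder α] [LinearOrder β] {n : ℕ}

def descentSet (v : Fin (n + 1) → α) : Finset (Fin n) :=
  Finset.univ.filter fun i => v i.succ < v i.castSucc

theorem mem_descentSet {v : Fin (n + 1) → α} {i : Fin n} :
    i ∈ descentSet v ↔ v i.succ < v i.castSucc := by
  simp [descentSet]

theorem descentSet_eq_of_lt_iff_lt {v : Fin (n + 1) → α} {w : Fin (n + 1) → β}
    (h : ∀ i j, v i < v j ↔ w i < w j) : descentSet v = descentSet w := by
  ext i
  simp only [mem_descentSet, h]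

theorem descentSet_comp_strictMono {f : α → β} (hf : StrictMono f) (v : Fin (n + 1) → α) :
    descentSet (f ∘ v) = descentSet v :=
  descentSet_eq_of_lt_iff_lt fun _ _ => hf.lt_iff_lt

theorem exists_perm_lt_iff_lt {N : ℕ} {v : Fin N → α} (hv : Injective v) :
    ∃ ρ : Perm (Fin N), ∀ i j, ρ i < ρ j ↔ v i < v j := by
  have hsorted : StrictMono (v ∘ Tuple.sort v) :=
    (Tuple.monotone_sort v).strictMono_of_injective (hv.comp (Tuple.sort v).injective)
  refine ⟨(Tuple.sort v)⁻¹, fun i j => ?_⟩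
  simpa using (hsorted.lt_iff_lt (a := (Tuple.sort v)⁻¹ i) (b := (Tuple.sort v)⁻¹ j)).symm

theorem exists_perm_Des_eq_iff {v : Fin (n + 1) → α} (hv : Injective v) (T : Finset (Fin n)) :
    (∃ ρ : Perm (Fin (n + 1)), Des ρ = T ∧ ∀ i j, ρ i < ρ j ↔ v i < v j) ↔
      descentSet v = T := by
  constructor
  · rintro ⟨ρ, rfl, hρ⟩
    exact (descentSet_eq_of_lt_iff_lt hρ).symm
  · rintro rfl
    obtain ⟨ρ, hρ⟩ := exists_perm_lt_iff_lt hv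
    exact ⟨ρ, descentSet_eq_of_lt_iff_lt hρ, hρ⟩

end Descents

section Signed

variable {α : Type*} [AddCommGroup α] [LinearOrder α] [IsOrderedAddMonoid α]

def signed (b : Bool) (x : α) : α := if b then x else -x

theorem signed_eq_signed_iff {b c : Bool} {x y : α} (hx : 0 < x) (hy : 0 < y) :
    signed b x = signed c y ↔ b = c ∧ x = y := by
  have hxy : -x < y := (neg_neg_of_pos hx).trans hy
  have hyx : -y < x := (neg_neg_of_pos hy).trans hx
  cases b <;> cases c <;> simp [signed, hxy.ne, hyx.ne']

theorem signed_lt_signed_congr {b c : Bool} {x y x' y' : α}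
    (hx : 0 < x) (hy : 0 < y) (hx' : 0 < x') (hy' : 0 < y') (hxy : x ≠ y) (hxy' : x' ≠ y')
    (h : x < y ↔ x' < y') : signed b x < signed c y ↔ signed b x' < signed c y' := by
  cases b <;> cases c <;> simp only [signed, Bool.false_eq_true, if_false, if_true]
  · rw [neg_lt_neg_iff, neg_lt_neg_iff, ← not_le, ← not_le, hxy.le_iff_lt, hxy'.le_iff_lt, h]
  · exact iff_of_true ((neg_neg_of_pos hx).trans hy) ((neg_neg_of_pos hx').trans hy')
  · exact iff_of_false (not_lt.2 ((neg_neg_of_pos hy).le.trans hx.le))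
      (not_lt.2 ((neg_neg_of_pos hy').le.trans hx'.le))
  · exact h

variable {n : ℕ}

theorem injective_signed {v : Fin (n + 1) → α} (hv : Injective v) (hpos : ∀ i, 0 < v i)
    (ε : Fin (n + 1) → Bool) : Injective fun i => signed (ε i) (v i) :=
  fun i j hij => hv ((signed_eq_signed_iff (hpos i) (hpos j)).1 hij).2

theorem descentSet_signed_congr {v w : Fin (n + 1) → α} (hv : Injective v) (hw : Injective w)
    (hvpos : ∀ i, 0 < v i) (hwpos : ∀ i, 0 < w i) (h : descentSet v = descentSet w)
    (ε : Fin (n + 1) → Bool) :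
    descentSet (fun i => signed (ε i) (v i)) = descentSet (fun i => signed (ε i) (w i)) := by
  ext i
  have hsucc : i.succ ≠ i.castSucc := Fin.castSucc_lt_succ.ne'
  simp only [mem_descentSet]
  exact signed_lt_signed_congr (hvpos _) (hvpos _) (hwpos _) (hwpos _) (hv.ne hsucc)
    (hw.ne hsucc) (by rw [← mem_descentSet, h, mem_descentSet])

end Signed

theorem signed_standardization_lumps_general (n : ℕ) (r : ℝ)
    (σ σ' : Equiv.Perm (Fin (n + 1))) (h : Des σ = Des σ')
    (T : Finset (Fin n)) :
    ∑ ε ∈ (Finset.univ : Finset (Fin (n + 1) → Bool)).filter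
        (fun ε => ∃ ρ : Equiv.Perm (Fin (n + 1)), Des ρ = T ∧
          ∀ i j : Fin (n + 1), ρ i < ρ j ↔
            (if ε i then ((σ i : ℤ) + 1) else -((σ i : ℤ) + 1)) <
              (if ε j then ((σ j : ℤ) + 1) else -((σ j : ℤ) + 1))),
      ∏ i, (if ε i then 1 / r else 1 - 1 / r) =
    ∑ ε ∈ (Finset.univ : Finset (Fin (n + 1) → Bool)).filter
        (fun ε => ∃ ρ : Equiv.Perm (Fin (n + 1)), Des ρ = T ∧
          ∀ i j : Fin (n + 1), ρ i < ρ j ↔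
            (if ε i then ((σ' i : ℤ) + 1) else -((σ' i : ℤ) + 1)) <
              (if ε j then ((σ' j : ℤ) + 1) else -((σ' j : ℤ) + 1))),
      ∏ i, (if ε i then 1 / r else 1 - 1 / r) := by
  have hpos (τ : Perm (Fin (n + 1))) (i : Fin (n + 1)) : (0 : ℤ) < τ i + 1 := by positivity
  have hinj (τ : Perm (Fin (n + 1))) : Injective fun i => (τ i : ℤ) + 1 :=
    (add_left_injective 1).comp (Nat.cast_injective.comp (Fin.val_injective.comp τ.injective))
  have hdes : descentSet (fun i => (σ i : ℤ) + 1) = descentSet (fun i => (σ' i : ℤ) + 1) := by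
    have hshift : StrictMono fun k : Fin (n + 1) => (k : ℤ) + 1 := fun _ _ hkl =>
      add_lt_add_left (Nat.cast_lt.2 hkl) 1
    exact (descentSet_comp_strictMono hshift σ).trans
      (h.trans (descentSet_comp_strictMono hshift σ').symm)
  refine Finset.sum_congr (Finset.filter_congr fun ε _ => ?_) fun _ _ => rfl
  exact (exists_perm_Des_eq_iff (injective_signed (hinj σ) (hpos σ) ε) T).trans <|
    (Eq.congr_left (descentSet_signed_congr (hinj σ) (hinj σ') (hpos σ) (hpos σ') hdes ε)).trans
      (exists_perm_Des_eq_iff (injective_signed (hinj σ') (hpos σ') ε) T).symm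

/-- the signed-standardization walk lumps by descent sets: the
total weight of the sign choices `ε` for which the standardization of the
signed sequence `(ε(1)·σ(1), …, ε(N)·σ(N))` has descent set `T` depends only
on `Des σ`.  (Here 1-indexed entries of `σ` are realized as `σ(i)+1`.) -/
theorem signed_standardization_lumps (n : ℕ) (r : ℝ) (hr : 1 ≤ r)
    (σ σ' : Equiv.Perm (Fin (n + 1))) (h : Des σ = Des σ')
    (T : Finset (Fin n)) :
    ∑ ε ∈ (Finset.univ : Finset (Fin (n + 1) → Bool)).filter
        (fun ε => ∃ ρ : Equiv.Perm (Fin (n + 1)), Des ρ = T ∧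
          ∀ i j : Fin (n + 1), ρ i < ρ j ↔
            (if ε i then ((σ i : ℤ) + 1) else -((σ i : ℤ) + 1)) <
              (if ε j then ((σ j : ℤ) + 1) else -((σ j : ℤ) + 1))),
      ∏ i, (if ε i then 1 / r else 1 - 1 / r) =
    ∑ ε ∈ (Finset.univ : Finset (Fin (n + 1) → Bool)).filter
        (fun ε => ∃ ρ : Equiv.Perm (Fin (n + 1)), Des ρ = T ∧
          ∀ i j : Fin (n + 1), ρ i < ρ j ↔
            (if ε i then ((σ' i : ℤ) + 1) else -((σ' i : ℤ) + 1)) <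
              (if ε j then ((σ' j : ℤ) + 1) else -((σ' j : ℤ) + 1))),
      ∏ i, (if ε i then 1 / r else 1 - 1 / r) :=
  signed_standardization_lumps_general n r σ σ' h T
end
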